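/- Expression substitution principle: if Δ ⊢ e : A and Δ, x : A; Γ ⊢ t : J_term (where J_term ranges over the five term judgments of ECMTT), then Δ; Γ ⊢ [e/x]t : J_term. -/
import Mathlib


/-!
ECMTT (Effectful Contextual Modal Type Theory), Zyuzin & Nanevski.

De Bruijn representation with two separate variable namespaces:
* Δ-indices for value variables `x : A` and modal variables `u :: A[Ψ]`
  (both live in the modal context Δ; index 0 is the most recently bound).
* Γ-indices for operations `op ÷ A ⇒ B` and continuations `k ∼: A @ S ⇒ B`
  (both live in the effect context Γ; index 0 is the most recently bound).
An algebraic theory Ψ is a list of operation signatures (input, output).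
-/

inductive Ty : Type where
  | base : ℕ → Ty
  | unit : Ty
  | arrow : Ty → Ty → Ty
  | box : List (Ty × Ty) → Ty → Ty

/-- Algebraic theory: list of operation signatures `A ⇒ B`. -/
abbrev Theory := List (Ty × Ty)

/-- Modal-context hypotheses: value variables and modal variables. -/
inductive DHyp : Type where
  | val : Ty → DHyp
  | modal : Ty → Theory → DHyp

/-- Effect-context hypotheses: operations and continuations. -/
inductive GHyp : Type where
  | op : Ty → Ty → GHyp
  | cont : Ty → Ty → Ty → GHyp   -- `k ∼: A @ S ⇒ B`

abbrev DCtx := List DHyp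
abbrev GCtx := List GHyp

/-- An algebraic theory viewed as an effect context (operations only). -/
def thCtx (Ψ : Theory) : GCtx := Ψ.map fun p => GHyp.op p.1 p.2

mutual
  /-- Expressions. -/
  inductive Expr : Type where
    | var : ℕ → Expr                      -- value variable (Δ-index)
    | unit : Expr                         -- the value () of the unit type
    | lam : Ty → Expr → Expr              -- λx:A. e  (binds a Δ value var)
    | app : Expr → Expr → Expr
    | box : Theory → Comp → Expr          -- box Ψ. c (resets Γ to Ψ)
    | letbox : Expr → Expr → Expr         -- let box u = e₁ in e₂ (binds a Δ modal var)
  /-- Computations. -/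
  inductive Comp : Type where
    | ret : Expr → Comp
    | bind : Stmt → Comp → Comp           -- x ← s; c (binds a Δ value var)
    | letbox : Expr → Comp → Comp         -- let box u = e in c (binds a Δ modal var)
  /-- Statements. -/
  inductive Stmt : Type where
    | op : ℕ → Expr → Stmt                -- op e (Γ-index)
    | cont : ℕ → Expr → Expr → Stmt       -- k(e₁, e₂) (Γ-index)
    | handle : ℕ → HSeq → Handler → Expr → Stmt  -- u with [Θ] h @ e (Δ-index for u)
  /-- Handlers. -/
  inductive Handler : Type where
    | retc : Comp → Handler               -- (return x @ z ↦ c): c binds x (idx1), z (idx0)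
    | opc : Handler → Comp → Handler      -- h, (op(x,k) @ z ↦ c): c binds x(Δ1), z(Δ0), k(Γ0)
  /-- Handling sequences. -/
  inductive HSeq : Type where
    | nil : HSeq
    | cons : HSeq → Handler → Expr → Comp → HSeq  -- Θ, (h @ e to x. c): c binds x (Δ0)
end

/-- Lift a renaming under one binder. -/
def liftR (ρ : ℕ → ℕ) : ℕ → ℕ
  | 0 => 0
  | n + 1 => ρ n + 1

mutual
  /-- Renaming of Δ-indices. -/
  def renDE (ρ : ℕ → ℕ) : Expr → Expr
    | .var n => .var (ρ n)
    | .unit => .unit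
    | .lam A e => .lam A (renDE (liftR ρ) e)
    | .app e1 e2 => .app (renDE ρ e1) (renDE ρ e2)
    | .box Ψ c => .box Ψ (renDC ρ c)
    | .letbox e1 e2 => .letbox (renDE ρ e1) (renDE (liftR ρ) e2)
  def renDC (ρ : ℕ → ℕ) : Comp → Comp
    | .ret e => .ret (renDE ρ e)
    | .bind s c => .bind (renDS ρ s) (renDC (liftR ρ) c)
    | .letbox e c => .letbox (renDE ρ e) (renDC (liftR ρ) c)
  def renDS (ρ : ℕ → ℕ) : Stmt → Stmt
    | .op i e => .op i (renDE ρ e)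
    | .cont k e1 e2 => .cont k (renDE ρ e1) (renDE ρ e2)
    | .handle u Θ h e => .handle (ρ u) (renDT ρ Θ) (renDH ρ h) (renDE ρ e)
  def renDH (ρ : ℕ → ℕ) : Handler → Handler
    | .retc c => .retc (renDC (liftR (liftR ρ)) c)
    | .opc h c => .opc (renDH ρ h) (renDC (liftR (liftR ρ)) c)
  def renDT (ρ : ℕ → ℕ) : HSeq → HSeq
    | .nil => .nil
    | .cons Θ h e c => .cons (renDT ρ Θ) (renDH ρ h) (renDE ρ e) (renDC (liftR ρ) c)
end

mutual
  /-- Renaming of Γ-indices (expressions contain no free Γ-variables). -/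
  def renGC (ρ : ℕ → ℕ) : Comp → Comp
    | .ret e => .ret e
    | .bind s c => .bind (renGS ρ s) (renGC ρ c)
    | .letbox e c => .letbox e (renGC ρ c)
  def renGS (ρ : ℕ → ℕ) : Stmt → Stmt
    | .op i e => .op (ρ i) e
    | .cont k e1 e2 => .cont (ρ k) e1 e2
    | .handle u Θ h e => .handle u Θ (renGH ρ h) e
  def renGH (ρ : ℕ → ℕ) : Handler → Handler
    | .retc c => .retc (renGC ρ c)
    | .opc h c => .opc (renGH ρ h) (renGC (liftR ρ) c)
end

/-- Index adjustment for removing the Δ-variable at depth `d`. -/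
def sIdx (d m : ℕ) : ℕ := if m < d then m else m - 1

/-- Variable case of expression substitution at depth `d`. -/
def sVar (e : Expr) (d m : ℕ) : Expr :=
  if m < d then .var m else if m = d then renDE (· + d) e else .var (m - 1)

mutual
  /-- Expression substitution `[e/x]·`: substitute `e` for the Δ value variable at depth `d`. -/
  def esbE (e : Expr) : ℕ → Expr → Expr
    | d, .var m => sVar e d m
    | _, .unit => .unit
    | d, .lam A e' => .lam A (esbE e (d+1) e')
    | d, .app e1 e2 => .app (esbE e d e1) (esbE e d e2)
    | d, .box Ψ c => .box Ψ (esbC e d c)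
    | d, .letbox e1 e2 => .letbox (esbE e d e1) (esbE e (d+1) e2)
  def esbC (e : Expr) : ℕ → Comp → Comp
    | d, .ret e' => .ret (esbE e d e')
    | d, .bind s c => .bind (esbS e d s) (esbC e (d+1) c)
    | d, .letbox e' c => .letbox (esbE e d e') (esbC e (d+1) c)
  def esbS (e : Expr) : ℕ → Stmt → Stmt
    | d, .op i e' => .op i (esbE e d e')
    | d, .cont k e1 e2 => .cont k (esbE e d e1) (esbE e d e2)
    | d, .handle u Θ h e' => .handle (sIdx d u) (esbT e d Θ) (esbH e d h) (esbE e d e')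
  def esbH (e : Expr) : ℕ → Handler → Handler
    | d, .retc c => .retc (esbC e (d+2) c)
    | d, .opc h c => .opc (esbH e d h) (esbC e (d+2) c)
  def esbT (e : Expr) : ℕ → HSeq → HSeq
    | _, .nil => .nil
    | d, .cons Θ h e' c => .cons (esbT e d Θ) (esbH e d h) (esbE e d e') (esbC e (d+1) c)
end

/-- Monadic substitution `⟨c/x⟩c′` (Figure 5a): sequentially compose `c` before `c′` via `x`. -/
def monSub : Comp → Comp → Comp
  | .ret e, c' => esbC e 0 c'
  | .bind s c, c' => .bind s (monSub c (renDC (liftR Nat.succ) c'))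
  | .letbox e c, c' => .letbox e (monSub c (renDC (liftR Nat.succ) c'))

/-- Index adjustment for removing the Γ-variable at position `g`. -/
def adjG (g m : ℕ) : ℕ := if m < g then m else m - 1

mutual
  /-- Continuation substitution `⟨⟨(x,y). body / k⟩⟩ ·` (Figure 5b).
  `body` is typed in `Δ, x, y; Γ` (so `y` is Δ-index 0 and `x` is Δ-index 1);
  `g` is the current Γ-index of `k`; `dsh`/`gsh` record the crossed Δ and Γ binders. -/
  def ksubC (body : Comp) : ℕ → ℕ → ℕ → Comp → Comp
    | _, _, _, .ret e => .ret e
    | g, dsh, gsh, .bind (.cont k e1 e2) c' =>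
        if k = g then
          monSub
            (esbC e2 0 (esbC e1 1
              (renDC (liftR (liftR (· + dsh))) (renGC (· + gsh) body))))
            (ksubC body g (dsh+1) gsh c')
        else
          .bind (.cont (adjG g k) e1 e2) (ksubC body g (dsh+1) gsh c')
    | g, dsh, gsh, .bind (.op i e) c' =>
        .bind (.op (adjG g i) e) (ksubC body g (dsh+1) gsh c')
    | g, dsh, gsh, .bind (.handle u Θ h e) c' =>
        .bind (.handle u Θ (ksubH body g dsh gsh h) e) (ksubC body g (dsh+1) gsh c')
    | g, dsh, gsh, .letbox e c' => .letbox e (ksubC body g (dsh+1) gsh c')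
  def ksubH (body : Comp) : ℕ → ℕ → ℕ → Handler → Handler
    | g, dsh, gsh, .retc c => .retc (ksubC body g (dsh+2) gsh c)
    | g, dsh, gsh, .opc h c =>
        .opc (ksubH body g dsh gsh h) (ksubC body (g+1) (dsh+2) (gsh+1) c)
end

/-- The return clause of a handler. -/
def hret : Handler → Comp
  | .retc c => c
  | .opc h _ => hret h

/-- The clause of a handler for the operation with Γ-index `i` (0 = last-added operation). -/
def hop : Handler → ℕ → Comp
  | .retc c, _ => c
  | .opc _ c, 0 => c
  | .opc h _, i + 1 => hop h i

/-- Handling `⦃·⦄ h @ e` (Figure 5c), carrying a pending Δ-renaming `ρ` of the handled term. -/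
def hndl : Comp → (ℕ → ℕ) → Handler → Expr → Comp
  | .ret e', ρ, h, _e =>
      -- [ρ e′ / x] [e / z] (return clause)
      esbC (renDE ρ e') 0 (esbC _e 0 (hret h))
  | .bind (.op i e') c', ρ, h, e =>
      -- ⟨⟨(y, z′). ⦃c′⦄ h @ z′ / k⟩⟩ ([ρ e′ / x′] [e / z] c_op)
      ksubC (hndl c' (fun n => liftR ρ n + 1) (renDH (· + 2) h) (.var 0)) 0 0 0
        (esbC (renDE ρ e') 0 (esbC e 0 (hop h i)))
  | .bind (.cont k e1 e2) c', ρ, h, e =>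
      -- unreachable on well-typed input (the handled term lives in a theory, no continuations)
      .bind (renDS ρ (.cont k e1 e2)) (hndl c' (liftR ρ) (renDH (· + 1) h) (renDE (· + 1) e))
  | .bind (.handle u Θ h' e') c', ρ, h, e =>
      .bind (.handle (ρ u)
          (.cons (renDT ρ Θ) (renDH ρ h') (renDE ρ e') (renDC (liftR ρ) c')) h e)
        (.ret (.var 0))
  | .letbox e' c', ρ, h, e =>
      .letbox (renDE ρ e') (hndl c' (liftR ρ) (renDH (· + 1) h) (renDE (· + 1) e))

/-- Handling sequencing `⦃·⦄ Θ` (Figure 5d). -/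
def hndlSeq : Comp → HSeq → Comp
  | c, .nil => c
  | c, .cons Θ h e c' => monSub (hndl (hndlSeq c Θ) id h e) c'

mutual
  /-- Modal substitution `[[Ψ. c / u]] ·` for the modal variable at Δ-depth `d` (Appendix A). -/
  def msubE (c : Comp) : ℕ → Expr → Expr
    | d, .var m => .var (sIdx d m)
    | _, .unit => .unit
    | d, .lam A e => .lam A (msubE c (d+1) e)
    | d, .app e1 e2 => .app (msubE c d e1) (msubE c d e2)
    | d, .box Ψ c' => .box Ψ (msubC c d c')
    | d, .letbox e1 e2 => .letbox (msubE c d e1) (msubE c (d+1) e2)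
  def msubC (c : Comp) : ℕ → Comp → Comp
    | d, .ret e => .ret (msubE c d e)
    | d, .bind (.handle u Θ h e) c' =>
        if u = d then
          -- guarded occurrence of u: ⟨ ⦃⦃c⦄Θ'⦄ h' @ e' / x′ ⟩ c″
          monSub
            (hndl (hndlSeq (renDC (· + d) c) (msubT c d Θ)) id (msubH c d h) (msubE c d e))
            (msubC c (d+1) c')
        else
          .bind (.handle (sIdx d u) (msubT c d Θ) (msubH c d h) (msubE c d e))
            (msubC c (d+1) c')
    | d, .bind (.op i e) c' => .bind (.op i (msubE c d e)) (msubC c (d+1) c')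
    | d, .bind (.cont k e1 e2) c' =>
        .bind (.cont k (msubE c d e1) (msubE c d e2)) (msubC c (d+1) c')
    | d, .letbox e c' => .letbox (msubE c d e) (msubC c (d+1) c')
  def msubS (c : Comp) : ℕ → Stmt → Stmt
    | d, .op i e => .op i (msubE c d e)
    | d, .cont k e1 e2 => .cont k (msubE c d e1) (msubE c d e2)
    | d, .handle u Θ h e => .handle (sIdx d u) (msubT c d Θ) (msubH c d h) (msubE c d e)
  def msubH (c : Comp) : ℕ → Handler → Handler
    | d, .retc c' => .retc (msubC c (d+2) c')
    | d, .opc h c' => .opc (msubH c d h) (msubC c (d+2) c')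
  def msubT (c : Comp) : ℕ → HSeq → HSeq
    | _, .nil => .nil
    | d, .cons Θ h e c' => .cons (msubT c d Θ) (msubH c d h) (msubE c d e) (msubC c (d+1) c')
end

/-- Clause of the identity handler for the operation with Γ-index `n` (relative to the full
theory): `opₙ(x, k) @ z ↦ y ← opₙ x; k(y, z)`. Inside the clause body the effect context is
extended by `k`, so the operation index becomes `n + 1`. -/
def idClause (n : ℕ) : Comp :=
  .bind (.op (n+1) (.var 1)) (.bind (.cont 0 (.var 0) (.var 1)) (.ret (.var 0)))

def idHandlerAux : ℕ → Theory → Handler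
  | _, [] => .retc (.ret (.var 1))     -- return x @ z ↦ ret x
  | n, _ :: Ψ => .opc (idHandlerAux (n+1) Ψ) (idClause n)

/-- The identity handler `id_Ψ` for a theory `Ψ`. -/
def idHandler (Ψ : Theory) : Handler := idHandlerAux 0 Ψ

mutual
  /-- Expression typing `Δ ⊢ e : A`. -/
  inductive ETy : DCtx → Expr → Ty → Prop where
    | var : Δ[x]? = some (.val A) → ETy Δ (.var x) A
    | unit : ETy Δ .unit .unit
    | lam : ETy (.val A :: Δ) e B → ETy Δ (.lam A e) (.arrow A B)
    | app : ETy Δ e1 (.arrow A B) → ETy Δ e2 A → ETy Δ (.app e1 e2) B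
    | box : CTy Δ (thCtx Ψ) c A → ETy Δ (.box Ψ c) (.box Ψ A)
    | letbox : ETy Δ e1 (.box Ψ A) → ETy (.modal A Ψ :: Δ) e2 B →
        ETy Δ (.letbox e1 e2) B
  /-- Computation typing `Δ; Γ ⊢ c ÷ A`. -/
  inductive CTy : DCtx → GCtx → Comp → Ty → Prop where
    | ret : ETy Δ e A → CTy Δ Γ (.ret e) A
    | bind : STy Δ Γ s A → CTy (.val A :: Δ) Γ c B → CTy Δ Γ (.bind s c) B
    | letbox : ETy Δ e (.box Ψ A) → CTy (.modal A Ψ :: Δ) Γ c B →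
        CTy Δ Γ (.letbox e c) B
  /-- Statement typing `Δ; Γ ⊢ s ÷ₛ A`. -/
  inductive STy : DCtx → GCtx → Stmt → Ty → Prop where
    | op : Γ[i]? = some (.op A B) → ETy Δ e A → STy Δ Γ (.op i e) B
    | cont : Γ[k]? = some (.cont A S B) → ETy Δ e1 A → ETy Δ e2 S →
        STy Δ Γ (.cont k e1 e2) B
    | mvar : Δ[u]? = some (.modal A Ψ) → TTy Δ Ψ' Θ A Ψ B →
        HTy Δ Γ h B Ψ' S C → ETy Δ e S → STy Δ Γ (.handle u Θ h e) C
  /-- Handler typing `Δ; Γ ⊢ h ÷ A[Ψ] ⇒@S B`. -/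
  inductive HTy : DCtx → GCtx → Handler → Ty → Theory → Ty → Ty → Prop where
    | retc : CTy (.val S :: .val A :: Δ) Γ c B → HTy Δ Γ (.retc c) A [] S B
    | opc : HTy Δ Γ h C Ψ S C' →
        CTy (.val S :: .val A :: Δ) (.cont B S C' :: Γ) c C' →
        HTy Δ Γ (.opc h c) C ((A, B) :: Ψ) S C'
  /-- Handling-sequence typing `Δ; Ψ ⊢ Θ ÷ A[Ψ'] ⇒ B`. -/
  inductive TTy : DCtx → Theory → HSeq → Ty → Theory → Ty → Prop where
    | nil : Ψ' <+: Ψ → TTy Δ Ψ .nil A Ψ' A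
    | cons : TTy Δ Ψ' Θ A Ψ'' B → HTy Δ (thCtx Ψ) h B Ψ' S C → ETy Δ e S →
        CTy (.val C :: Δ) (thCtx Ψ) c D → TTy Δ Ψ (.cons Θ h e c) A Ψ'' D
end

/-- Expression values: λ-abstractions, boxes, and base values such as (). -/
inductive EVal : Expr → Prop where
  | unit : EVal .unit
  | lam : EVal (.lam A e)
  | box : EVal (.box Ψ c)

/-- Call-by-value small-step reduction on expressions (Figure 6). -/
inductive EStep : Expr → Expr → Prop where
  | app1 : EStep e1 e1' → EStep (.app e1 e2) (.app e1' e2)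
  | app2 : EVal v → EStep e2 e2' → EStep (.app v e2) (.app v e2')
  | beta : EVal v → EStep (.app (.lam A e) v) (esbE v 0 e)
  | letbox1 : EStep e1 e1' → EStep (.letbox e1 e2) (.letbox e1' e2)
  | letbox : EStep (.letbox (.box Ψ c) e2) (msubE c 0 e2)

/-- Call-by-value small-step reduction on computations (Figure 6). -/
inductive CStep : Comp → Comp → Prop where
  | ret : EStep e e' → CStep (.ret e) (.ret e')
  | letbox1 : EStep e e' → CStep (.letbox e c) (.letbox e' c)
  | letbox : CStep (.letbox (.box Ψ c1) c2) (msubC c1 0 c2)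


/-- A renaming `ρ` is OK from `Δ` to `Δ'` if it preserves lookups. -/
def OkR (ρ : ℕ → ℕ) (Δ Δ' : DCtx) : Prop :=
  ∀ n h, Δ[n]? = some h → Δ'[ρ n]? = some h

theorem okR_lift {ρ : ℕ → ℕ} {Δ Δ' : DCtx} (H : OkR ρ Δ Δ') (d : DHyp) :
    OkR (liftR ρ) (d :: Δ) (d :: Δ') := by
  intro n h hn
  cases n with
  | zero => simpa [liftR] using hn
  | succ n =>
    simp only [liftR, List.getElem?_cons_succ] at *
    exact H n h hn

theorem okR_add (Δ₁ Δ : DCtx) : OkR (· + Δ₁.length) Δ (Δ₁ ++ Δ) := by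
  intro n h hn
  show (Δ₁ ++ Δ)[n + Δ₁.length]? = some h
  rw [List.getElem?_append_right (by omega)]
  simpa using hn

mutual
theorem renE (t : Expr) {Δ Δ' : DCtx} {ρ : ℕ → ℕ} {A : Ty}
    (H : OkR ρ Δ Δ') (h : ETy Δ t A) : ETy Δ' (renDE ρ t) A := by
  cases t with
  | var n => cases h with | var hv => exact .var (H _ _ hv)
  | unit => cases h; exact .unit
  | lam A e =>
      cases h with | lam h1 => exact .lam (renE e (okR_lift H _) h1)
  | app e1 e2 =>
      cases h with | app h1 h2 => exact .app (renE e1 H h1) (renE e2 H h2)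
  | box Ψ c => cases h with | box h1 => exact .box (renC c H h1)
  | letbox e1 e2 =>
      cases h with | letbox h1 h2 =>
        exact .letbox (renE e1 H h1) (renE e2 (okR_lift H _) h2)
  termination_by structural t

theorem renC (t : Comp) {Δ Δ' : DCtx} {Γ : GCtx} {ρ : ℕ → ℕ} {A : Ty}
    (H : OkR ρ Δ Δ') (h : CTy Δ Γ t A) : CTy Δ' Γ (renDC ρ t) A := by
  cases t with
  | ret e => cases h with | ret h1 => exact .ret (renE e H h1)
  | bind s c =>
      cases h with | bind h1 h2 =>
        exact .bind (renS s H h1) (renC c (okR_lift H _) h2)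
  | letbox e c =>
      cases h with | letbox h1 h2 =>
        exact .letbox (renE e H h1) (renC c (okR_lift H _) h2)
  termination_by structural t

theorem renS (t : Stmt) {Δ Δ' : DCtx} {Γ : GCtx} {ρ : ℕ → ℕ} {A : Ty}
    (H : OkR ρ Δ Δ') (h : STy Δ Γ t A) : STy Δ' Γ (renDS ρ t) A := by
  cases t with
  | op i e => cases h with | op h1 h2 => exact .op h1 (renE e H h2)
  | cont k e1 e2 =>
      cases h with | cont h1 h2 h3 =>
        exact .cont h1 (renE e1 H h2) (renE e2 H h3)
  | handle u Θ hh e =>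
      cases h with | mvar h1 h2 h3 h4 =>
        exact .mvar (H _ _ h1) (renT Θ H h2) (renH hh H h3) (renE e H h4)
  termination_by structural t

theorem renH (t : Handler) {Δ Δ' : DCtx} {Γ : GCtx} {ρ : ℕ → ℕ} {B : Ty}
    {Ψ : Theory} {S C : Ty}
    (H : OkR ρ Δ Δ') (h : HTy Δ Γ t B Ψ S C) : HTy Δ' Γ (renDH ρ t) B Ψ S C := by
  cases t with
  | retc c =>
      cases h with | retc h1 => exact .retc (renC c (okR_lift (okR_lift H _) _) h1)
  | opc hh c =>
      cases h with | opc h1 h2 =>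
        exact .opc (renH hh H h1) (renC c (okR_lift (okR_lift H _) _) h2)
  termination_by structural t

theorem renT (t : HSeq) {Δ Δ' : DCtx} {Ψe : Theory} {ρ : ℕ → ℕ} {B : Ty}
    {Ψ' : Theory} {C : Ty}
    (H : OkR ρ Δ Δ') (h : TTy Δ Ψe t B Ψ' C) : TTy Δ' Ψe (renDT ρ t) B Ψ' C := by
  cases t with
  | nil => cases h with | nil h1 => exact .nil h1
  | cons Θ hh e c =>
      cases h with | cons h1 h2 h3 h4 =>
        exact .cons (renT Θ H h1) (renH hh H h2) (renE e H h3)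
          (renC c (okR_lift H _) h4)
  termination_by structural t
end

/-- Lookup facts about `Δ₁ ++ .val A :: Δ`. -/
theorem subst_lookup {Δ₁ Δ : DCtx} {A : Ty} {m : ℕ} {h : DHyp}
    (hm : (Δ₁ ++ DHyp.val A :: Δ)[m]? = some h) :
    (m < Δ₁.length ∧ (Δ₁ ++ Δ)[m]? = some h) ∨
    (m = Δ₁.length ∧ h = .val A) ∨
    (Δ₁.length < m ∧ (Δ₁ ++ Δ)[m - 1]? = some h) := by
  rcases lt_trichotomy m Δ₁.length with hlt | heq | hgt
  · left
    refine ⟨hlt, ?_⟩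
    rw [List.getElem?_append, if_pos hlt] at hm ⊢
    exact hm
  · right; left
    refine ⟨heq, ?_⟩
    rw [List.getElem?_append_right (le_of_eq heq.symm), heq] at hm
    simp only [Nat.sub_self, List.getElem?_cons_zero, Option.some.injEq] at hm
    exact hm.symm
  · right; right
    refine ⟨hgt, ?_⟩
    rw [List.getElem?_append_right (by omega)] at hm ⊢
    rw [show m - Δ₁.length = (m - Δ₁.length - 1) + 1 by omega] at hm
    rw [List.getElem?_cons_succ] at hm
    rw [show m - 1 - Δ₁.length = m - Δ₁.length - 1 by omega]
    exact hm

mutual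
theorem sbE (t : Expr) {Δ₁ Δ : DCtx} {e : Expr} {A B : Ty}
    (he : ETy Δ e A) (h : ETy (Δ₁ ++ .val A :: Δ) t B) :
    ETy (Δ₁ ++ Δ) (esbE e Δ₁.length t) B := by
  cases t with
  | var m =>
      cases h with
      | var hv =>
        rw [esbE]
        unfold sVar
        rcases subst_lookup hv with ⟨h1, h2⟩ | ⟨h1, h2⟩ | ⟨h1, h2⟩
        · rw [if_pos h1]; exact .var h2
        · rw [if_neg (by omega), if_pos h1]
          cases h2
          exact renE e (okR_add Δ₁ Δ) he
        · rw [if_neg (by omega), if_neg (by omega)]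
          exact .var h2
  | unit => cases h; rw [esbE]; exact .unit
  | lam A' e' =>
      cases h with
      | lam h1 =>
        rw [esbE]
        exact .lam (sbE (Δ₁ := .val A' :: Δ₁) e' he h1)
  | app e1 e2 =>
      cases h with
      | app h1 h2 => rw [esbE]; exact .app (sbE e1 he h1) (sbE e2 he h2)
  | box Ψ c => cases h with | box h1 => rw [esbE]; exact .box (sbC c he h1)
  | letbox e1 e2 =>
      cases h with
      | letbox h1 h2 =>
        rw [esbE]
        exact .letbox (sbE e1 he h1) (sbE (Δ₁ := .modal _ _ :: Δ₁) e2 he h2)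
  termination_by structural t

theorem sbC (t : Comp) {Δ₁ Δ : DCtx} {Γ : GCtx} {e : Expr} {A B : Ty}
    (he : ETy Δ e A) (h : CTy (Δ₁ ++ .val A :: Δ) Γ t B) :
    CTy (Δ₁ ++ Δ) Γ (esbC e Δ₁.length t) B := by
  cases t with
  | ret e' => cases h with | ret h1 => rw [esbC]; exact .ret (sbE e' he h1)
  | bind s c =>
      cases h with
      | bind h1 h2 =>
        rw [esbC]
        exact .bind (sbS s he h1) (sbC (Δ₁ := .val _ :: Δ₁) c he h2)
  | letbox e' c =>
      cases h with
      | letbox h1 h2 =>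
        rw [esbC]
        exact .letbox (sbE e' he h1) (sbC (Δ₁ := .modal _ _ :: Δ₁) c he h2)
  termination_by structural t

theorem sbS (t : Stmt) {Δ₁ Δ : DCtx} {Γ : GCtx} {e : Expr} {A B : Ty}
    (he : ETy Δ e A) (h : STy (Δ₁ ++ .val A :: Δ) Γ t B) :
    STy (Δ₁ ++ Δ) Γ (esbS e Δ₁.length t) B := by
  cases t with
  | op i e' => cases h with | op h1 h2 => rw [esbS]; exact .op h1 (sbE e' he h2)
  | cont k e1 e2 =>
      cases h with
      | cont h1 h2 h3 => rw [esbS]; exact .cont h1 (sbE e1 he h2) (sbE e2 he h3)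
  | handle u Θ hh e' =>
      cases h with
      | mvar h1 h2 h3 h4 =>
        rw [esbS]
        rcases subst_lookup h1 with ⟨hc1, hc2⟩ | ⟨hc1, hc2⟩ | ⟨hc1, hc2⟩
        · exact .mvar (by rw [sIdx, if_pos hc1]; exact hc2) (sbT Θ he h2)
            (sbH hh he h3) (sbE e' he h4)
        · exact DHyp.noConfusion hc2
        · exact .mvar (by rw [sIdx, if_neg (by omega)]; exact hc2) (sbT Θ he h2)
            (sbH hh he h3) (sbE e' he h4)
  termination_by structural t

theorem sbH (t : Handler) {Δ₁ Δ : DCtx} {Γ : GCtx} {e : Expr} {A B : Ty}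
    {Ψ : Theory} {S C : Ty}
    (he : ETy Δ e A) (h : HTy (Δ₁ ++ .val A :: Δ) Γ t B Ψ S C) :
    HTy (Δ₁ ++ Δ) Γ (esbH e Δ₁.length t) B Ψ S C := by
  cases t with
  | retc c =>
      cases h with
      | retc h1 =>
        rw [esbH]
        exact .retc (sbC (Δ₁ := .val _ :: .val _ :: Δ₁) c he h1)
  | opc hh c =>
      cases h with
      | opc h1 h2 =>
        rw [esbH]
        exact .opc (sbH hh he h1) (sbC (Δ₁ := .val _ :: .val _ :: Δ₁) c he h2)
  termination_by structural t

theorem sbT (t : HSeq) {Δ₁ Δ : DCtx} {Ψe : Theory} {e : Expr} {A B : Ty}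
    {Ψ' : Theory} {C : Ty}
    (he : ETy Δ e A) (h : TTy (Δ₁ ++ .val A :: Δ) Ψe t B Ψ' C) :
    TTy (Δ₁ ++ Δ) Ψe (esbT e Δ₁.length t) B Ψ' C := by
  cases t with
  | nil => cases h with | nil h1 => rw [esbT]; exact .nil h1
  | cons Θ hh e' c =>
      cases h with
      | cons h1 h2 h3 h4 =>
        rw [esbT]
        exact .cons (sbT Θ he h1) (sbH hh he h2) (sbE e' he h3)
          (sbC (Δ₁ := .val _ :: Δ₁) c he h4)
  termination_by structural t
end

/-- Expression substitution principle, Lemma 2: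
if `Δ ⊢ e : A` and `Δ, x : A; Γ ⊢ t : J_term`, then `Δ; Γ ⊢ [e/x]t : J_term`,
for each of the five term judgments of ECMTT. -/
theorem ecmtt_expr_subst :
    ∀ (Δ : DCtx) (e : Expr) (A : Ty), ETy Δ e A →
      ((∀ (e' : Expr) (B : Ty),
          ETy (.val A :: Δ) e' B → ETy Δ (esbE e 0 e') B) ∧
       (∀ (Γ : GCtx) (c : Comp) (B : Ty),
          CTy (.val A :: Δ) Γ c B → CTy Δ Γ (esbC e 0 c) B) ∧
       (∀ (Γ : GCtx) (s : Stmt) (B : Ty),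
          STy (.val A :: Δ) Γ s B → STy Δ Γ (esbS e 0 s) B) ∧
       (∀ (Γ : GCtx) (h : Handler) (B : Ty) (Ψ : Theory) (S C : Ty),
          HTy (.val A :: Δ) Γ h B Ψ S C → HTy Δ Γ (esbH e 0 h) B Ψ S C) ∧
       (∀ (Ψe : Theory) (Θ : HSeq) (B : Ty) (Ψ' : Theory) (C : Ty),
          TTy (.val A :: Δ) Ψe Θ B Ψ' C → TTy Δ Ψe (esbT e 0 Θ) B Ψ' C)) := by
  intro Δ e A he
  refine ⟨fun e' B h => sbE (Δ₁ := []) e' he h,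
          fun Γ c B h => sbC (Δ₁ := []) c he h,
          fun Γ s B h => sbS (Δ₁ := []) s he h,
          fun Γ h B Ψ S C hh => sbH (Δ₁ := []) h he hh,
          fun Ψe Θ B Ψ' C h => sbT (Δ₁ := []) Θ he h⟩
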